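/- For m, n ≥ 0, the operator identity (XD)_{n+m,λ} = Σ_{j=0}^{m} Σ_{k=0}^{n} S_λ(m,j) C(n,k) (j − mλ)_{n−k,λ} X^j (XD)_{k,λ} D^j holds on polynomials. -/

import Mathlib

open Finset Polynomial

/-- The degenerate falling factorial `(x)_{n,λ}`. -/
noncomputable def degFall (l x : ℝ) (n : ℕ) : ℝ :=
  ∏ i ∈ Finset.range n, (x - (i : ℝ) * l)

/-- The multiplication-by-x operator `X` on polynomials. -/
noncomputable def Xop : Module.End ℝ (Polynomial ℝ) :=
  LinearMap.mulLeft ℝ (Polynomial.X : Polynomial ℝ)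

/-- The differentiation operator `D` on polynomials. -/
noncomputable def Dop : Module.End ℝ (Polynomial ℝ) :=
  Polynomial.derivative

/-- The degenerate falling factorial `(A)_{n,λ}` of an operator `A`. -/
noncomputable def opFall (l : ℝ) (A : Module.End ℝ (Polynomial ℝ)) (n : ℕ) :
    Module.End ℝ (Polynomial ℝ) :=
  ((List.range n).map (fun i => A - ((i : ℝ) * l) • (1 : Module.End ℝ (Polynomial ℝ)))).prod

lemma degFall_succ (l x : ℝ) (n : ℕ) :
    degFall l x (n+1) = degFall l x n * (x - (n:ℝ)*l) := Finset.prod_range_succ _ _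

lemma degFall_add_split (l x : ℝ) (a b : ℕ) :
    degFall l x (a + b) = degFall l x a * degFall l (x - (a:ℝ)*l) b := by
  unfold degFall
  rw [Finset.prod_range_add]
  congr 1
  refine Finset.prod_congr rfl fun i _ => ?_
  push_cast; ring

lemma degFall_vandermonde (l x y : ℝ) (n : ℕ) :
    degFall l (x + y) n =
      ∑ k ∈ Finset.range (n+1), (n.choose k : ℝ) * degFall l x k * degFall l y (n - k) := by
  induction n with
  | zero => simp [degFall]
  | succ n ih =>
    rw [degFall_succ, ih, Finset.sum_mul]
    simp only [mul_assoc]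
    rw [show n + 1 + 1 = n + 2 from rfl,
      Finset.sum_choose_succ_mul (fun i j => degFall l x i * degFall l y j) n]
    have h1 : ∀ i ∈ Finset.range (n+1),
        (n.choose i : ℝ) * (degFall l x i * (degFall l y (n - i) * (x + y - (n:ℝ)*l)))
        = (n.choose i : ℝ) * (degFall l x i * degFall l y (n + 1 - i))
          + (n.choose i : ℝ) * (degFall l x (i+1) * degFall l y (n - i)) := by
      intro i hi
      have hin : i ≤ n := Nat.lt_succ_iff.mp (Finset.mem_range.mp hi)
      have h2 : n + 1 - i = (n - i) + 1 := by omega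
      rw [h2, degFall_succ, degFall_succ]
      have hc : ((n - i : ℕ) : ℝ) = (n : ℝ) - (i : ℝ) := by
        push_cast [hin]; ring
      rw [hc]; ring
    rw [Finset.sum_congr rfl h1, Finset.sum_add_distrib]

lemma opFall_succ (l : ℝ) (A : Module.End ℝ (Polynomial ℝ)) (n : ℕ) :
    opFall l A (n+1) = opFall l A n * (A - ((n:ℝ)*l) • 1) := by
  unfold opFall
  rw [List.range_succ]
  simp

lemma XD_monomial (d : ℕ) : (Xop * Dop) (X^d : ℝ[X]) = (d:ℝ) • (X^d : ℝ[X]) := by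
  cases d with
  | zero => simp [Xop, Dop]
  | succ d =>
    simp only [Module.End.mul_apply, Dop, Xop, LinearMap.mulLeft_apply]
    rw [show (Polynomial.derivative : ℝ[X] →ₗ[ℝ] ℝ[X]) (X^(d+1)) = derivative (X^(d+1) : ℝ[X]) from rfl,
      derivative_X_pow, smul_eq_C_mul]
    push_cast
    rw [pow_succ]
    ring

lemma opFall_monomial (l : ℝ) (k d : ℕ) :
    opFall l (Xop * Dop) k (X^d : ℝ[X]) = degFall l (d:ℝ) k • (X^d : ℝ[X]) := by
  induction k with
  | zero => simp [opFall, degFall]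
  | succ k ih =>
    rw [opFall_succ, Module.End.mul_apply]
    have h1 : (Xop * Dop - ((k:ℝ)*l) • 1) (X^d : ℝ[X]) = ((d:ℝ) - (k:ℝ)*l) • (X^d : ℝ[X]) := by
      rw [LinearMap.sub_apply, LinearMap.smul_apply, XD_monomial, sub_smul]
      simp
    rw [h1, map_smul, ih, smul_smul, degFall_succ]
    ring_nf

lemma prod_desc_zero {j d : ℕ} (h : d < j) : (∏ i ∈ Finset.range j, ((d:ℝ) - (i:ℝ))) = 0 :=
  Finset.prod_eq_zero (Finset.mem_range.mpr h) (by simp)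

lemma Dpow_monomial (j d : ℕ) :
    (Dop^j) (X^d : ℝ[X]) = (∏ i ∈ Finset.range j, ((d:ℝ) - (i:ℝ))) • (X^(d-j) : ℝ[X]) := by
  induction j with
  | zero => simp
  | succ j ih =>
    rw [pow_succ', Module.End.mul_apply, ih, map_smul,
      show (Dop : Module.End ℝ ℝ[X]) (X^(d-j) : ℝ[X]) = derivative (X^(d-j) : ℝ[X]) from rfl,
      derivative_X_pow, Finset.prod_range_succ, show d - (j+1) = d - j - 1 from rfl]
    rcases lt_or_ge j d with h | h
    · rw [smul_eq_C_mul, smul_eq_C_mul, Nat.cast_sub h.le, C_mul]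
      ring
    · rw [Nat.sub_eq_zero_of_le h]
      simp only [Nat.cast_zero, Polynomial.C_0, zero_mul, smul_zero]
      rcases eq_or_lt_of_le h with h2 | h2
      · rw [h2]; simp
      · rw [prod_desc_zero h2, zero_mul, zero_smul]

lemma Xpow_monomial (j e : ℕ) : (Xop^j) (X^e : ℝ[X]) = (X^(j+e) : ℝ[X]) := by
  induction j with
  | zero => simp
  | succ j ih =>
    rw [pow_succ', Module.End.mul_apply, ih,
      show (Xop : Module.End ℝ ℝ[X]) (X^(j+e)) = X * X^(j+e) from rfl, ← pow_succ']
    ring_nf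

lemma action_monomial (l : ℝ) (j k d : ℕ) :
    (Xop ^ j * opFall l (Xop * Dop) k * Dop ^ j) (X^d : ℝ[X])
      = ((∏ i ∈ Finset.range j, ((d:ℝ) - (i:ℝ))) * degFall l ((d:ℝ) - (j:ℝ)) k)
          • (X^d : ℝ[X]) := by
  rw [Module.End.mul_apply, Module.End.mul_apply, Dpow_monomial, map_smul, opFall_monomial,
    map_smul, map_smul, Xpow_monomial]
  rcases le_or_gt j d with h | h
  · rw [Nat.add_sub_cancel' h, smul_smul, Nat.cast_sub h]
  · rw [prod_desc_zero h]; simp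

lemma scalar_identity (l : ℝ) (S : ℕ → ℕ → ℝ)
    (hS : ∀ m : ℕ, ∀ z : ℝ,
      degFall l z m = ∑ j ∈ Finset.range (m + 1), S m j * ∏ i ∈ Finset.range j, (z - (i : ℝ)))
    (n m d : ℕ) :
    degFall l (d:ℝ) (n + m) =
      ∑ j ∈ Finset.range (m+1), ∑ k ∈ Finset.range (n+1),
        S m j * (n.choose k : ℝ) * degFall l ((j:ℝ) - (m:ℝ)*l) (n-k)
          * ((∏ i ∈ Finset.range j, ((d:ℝ) - (i:ℝ))) * degFall l ((d:ℝ) - (j:ℝ)) k) := by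
  rw [add_comm n m, degFall_add_split, hS m (d:ℝ), Finset.sum_mul]
  refine Finset.sum_congr rfl fun j _ => ?_
  have key : degFall l ((d:ℝ) - (m:ℝ)*l) n
      = ∑ k ∈ Finset.range (n+1), (n.choose k : ℝ) * degFall l ((d:ℝ)-(j:ℝ)) k
          * degFall l ((j:ℝ) - (m:ℝ)*l) (n-k) := by
    rw [show (d:ℝ) - (m:ℝ)*l = ((d:ℝ)-(j:ℝ)) + ((j:ℝ) - (m:ℝ)*l) by ring,
      degFall_vandermonde]
  rw [key, Finset.mul_sum]
  refine Finset.sum_congr rfl fun k _ => ?_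
  ring


/-- `(XD)_{n+m,λ} = Σ_{j=0}^m Σ_{k=0}^n S_λ(m,j) C(n,k) (j − mλ)_{n−k,λ} X^j (XD)_{k,λ} D^j`,
where `S_λ(m,j)` are the degenerate Stirling numbers of the second kind, characterized by
`(z)_{m,λ} = Σ_j S_λ(m,j) z(z-1)⋯(z-j+1)`. -/
theorem XD_degFall_add (l : ℝ) (hl : l ≠ 0)
    (S : ℕ → ℕ → ℝ)
    (hS : ∀ m : ℕ, ∀ z : ℝ,
      degFall l z m = ∑ j ∈ Finset.range (m + 1), S m j * ∏ i ∈ Finset.range j, (z - (i : ℝ)))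
    (n m : ℕ) :
    opFall l (Xop * Dop) (n + m) =
      ∑ j ∈ Finset.range (m + 1), ∑ k ∈ Finset.range (n + 1),
        (S m j * (n.choose k : ℝ) * degFall l ((j : ℝ) - (m : ℝ) * l) (n - k)) •
          (Xop ^ j * opFall l (Xop * Dop) k * Dop ^ j) := by
  have hXd : ∀ d : ℕ,
      opFall l (Xop * Dop) (n + m) (X^d : ℝ[X])
        = (∑ j ∈ Finset.range (m + 1), ∑ k ∈ Finset.range (n + 1),
            (S m j * (n.choose k : ℝ) * degFall l ((j : ℝ) - (m : ℝ) * l) (n - k)) •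
              (Xop ^ j * opFall l (Xop * Dop) k * Dop ^ j)) (X^d : ℝ[X]) := by
    intro d
    rw [opFall_monomial]
    simp only [LinearMap.coe_sum, Finset.sum_apply, LinearMap.smul_apply, action_monomial,
      smul_smul, ← Finset.sum_smul]
    rw [scalar_identity l S hS n m d]
  apply LinearMap.ext
  intro p
  induction p using Polynomial.induction_on' with
  | add p q hp hq => rw [map_add, map_add, hp, hq]
  | monomial d c =>
    rw [← Polynomial.C_mul_X_pow_eq_monomial, ← smul_eq_C_mul, map_smul, map_smul, hXd d]
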